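/- arXiv:2010.15685 — 2 statements merged into one kernel-verified Lean document; each statement's English description precedes it below -/
import Mathlib

section
/- Let α ∈ [0,1], Λ > 0, c > 0, and let y_c be a stable-manifold function for the parameter c. Then for all x > 0 the two-sided estimate holds: −(2/((1+α)Λ))^{1/2}·x^{(1+α)/2} < y_c(x) < −(2/((1+α)Λ))^{1/2}·x^{(1+α)/2} + (c/Λ)·x. -/
open Real Set MeasureTheory Filter

noncomputable section

/-- A stable-manifold function for the parameter `c`: a continuous function on `[0,∞)`
vanishing at `0`, negative for `x > 0`, differentiable on `(0,∞)`, whose graph is a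
trajectory of the vector field `x' = y`, `Λ y' = c y + x^α`, i.e.
`Λ y(x) y'(x) = c y(x) + x^α` for all `x > 0`. -/
def IsStableManifold (α Λ c : ℝ) (y : ℝ → ℝ) : Prop :=
  ContinuousOn y (Set.Ici 0) ∧ y 0 = 0 ∧
  (∀ x > 0, y x < 0) ∧ (∀ x > 0, DifferentiableAt ℝ y x) ∧
  (∀ x > 0, Λ * y x * deriv y x = c * y x + x ^ α)

/-!
For `c = 0` the equation `Λ y y' = x^α` integrates to `y² = E(x) := 2 x^(1+α) / ((1+α) Λ)`.
For `c > 0` both `E - y²` and `((c/Λ) x - y)² - E` vanish at `0` and have positive derivative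
on `(0,∞)`, because `y' = c/Λ + x^α / (Λ y)` with `y < 0`. Taking square roots of
`y² < E < ((c/Λ) x - y)²` gives the two bounds.
-/

lemma pos_of_deriv_pos_of_map_zero {F : ℝ → ℝ} (hF : ContinuousOn F (Ici 0)) (h0 : F 0 = 0)
    (hF' : ∀ t > 0, 0 < deriv F t) {x : ℝ} (hx : 0 < x) : 0 < F x := by
  have hmono := strictMonoOn_of_deriv_pos (convex_Ici 0) hF (by simpa only [interior_Ici])
  simpa only [h0] using hmono self_mem_Ici hx.le hx

def stableEnvelope (α Λ x : ℝ) : ℝ := 2 / ((1 + α) * Λ) * x ^ (1 + α)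

section Envelope

variable {α Λ : ℝ}

lemma continuous_stableEnvelope (hα : 0 < 1 + α) : Continuous (stableEnvelope α Λ) :=
  continuous_const.mul (Real.continuous_rpow_const hα.le)

lemma stableEnvelope_zero (hα : 0 < 1 + α) : stableEnvelope α Λ 0 = 0 := by
  simp [stableEnvelope, Real.zero_rpow hα.ne']

lemma hasDerivAt_stableEnvelope (hα : 0 < 1 + α) (hΛ : Λ ≠ 0) {t : ℝ} (ht : 0 < t) :
    HasDerivAt (stableEnvelope α Λ) (2 / Λ * t ^ α) t := by
  have h := (Real.hasDerivAt_rpow_const (x := t) (p := 1 + α) (Or.inl ht.ne')).const_mul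
    (2 / ((1 + α) * Λ))
  refine h.congr_deriv ?_
  have := hα.ne'
  rw [add_sub_cancel_left]
  field_simp

lemma sq_sqrt_mul_rpow_half {C p x : ℝ} (hC : 0 ≤ C) (hx : 0 ≤ x) :
    (√C * x ^ (p / 2)) ^ 2 = C * x ^ p := by
  rw [mul_pow, Real.sq_sqrt hC, ← Real.rpow_natCast, ← Real.rpow_mul hx]
  norm_num

end Envelope

namespace IsStableManifold

variable {α Λ c : ℝ} {y : ℝ → ℝ}

lemma deriv_eq (hy : IsStableManifold α Λ c y) (hΛ : Λ ≠ 0) {t : ℝ} (ht : 0 < t) :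
    deriv y t = c / Λ + t ^ α / (Λ * y t) := by
  have hyt : y t ≠ 0 := (hy.2.2.1 t ht).ne
  field_simp
  linarith [hy.2.2.2.2 t ht]

lemma sq_lt_stableEnvelope (hy : IsStableManifold α Λ c y) (hα : 0 < 1 + α) (hΛ : 0 < Λ)
    (hc : 0 < c) {x : ℝ} (hx : 0 < x) : y x ^ 2 < stableEnvelope α Λ x := by
  obtain ⟨hcont, h0, hneg, hdiff, -⟩ := id hy
  suffices 0 < stableEnvelope α Λ x - y x ^ 2 by linarith
  refine pos_of_deriv_pos_of_map_zero (F := fun t => stableEnvelope α Λ t - y t ^ 2)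
    ?_ ?_ (fun t ht => ?_) hx
  · exact (continuous_stableEnvelope hα).continuousOn.sub (hcont.pow 2)
  · simp [stableEnvelope_zero hα, h0]
  have hyt := hneg t ht
  have hyt0 : y t ≠ 0 := hyt.ne
  have hF' : HasDerivAt (fun t => stableEnvelope α Λ t - y t ^ 2)
      (2 / Λ * t ^ α - 2 * y t * deriv y t) t := by
    refine ((hasDerivAt_stableEnvelope hα hΛ.ne' ht).fun_sub
      ((hdiff t ht).hasDerivAt.fun_pow 2)).congr_deriv ?_
    ring
  rw [hF'.deriv, hy.deriv_eq hΛ.ne' ht]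
  have key : 2 / Λ * t ^ α - 2 * y t * (c / Λ + t ^ α / (Λ * y t)) = 2 * c * (-y t) / Λ := by
    field_simp
    ring
  rw [key]
  have : 0 < -y t := by linarith
  positivity

lemma stableEnvelope_lt_sq (hy : IsStableManifold α Λ c y) (hα : 0 < 1 + α) (hΛ : 0 < Λ)
    (hc : 0 < c) {x : ℝ} (hx : 0 < x) : stableEnvelope α Λ x < (c / Λ * x - y x) ^ 2 := by
  obtain ⟨hcont, h0, hneg, hdiff, -⟩ := id hy
  suffices 0 < (c / Λ * x - y x) ^ 2 - stableEnvelope α Λ x by linarith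
  refine pos_of_deriv_pos_of_map_zero (F := fun t => (c / Λ * t - y t) ^ 2 - stableEnvelope α Λ t)
    ?_ ?_ (fun t ht => ?_) hx
  · exact (((continuousOn_const.mul continuousOn_id).sub hcont).pow 2).sub
      (continuous_stableEnvelope hα).continuousOn
  · simp [stableEnvelope_zero hα, h0]
  have hyt := hneg t ht
  have hyt0 : y t ≠ 0 := hyt.ne
  have hlin := ((hasDerivAt_id' t).const_mul (c / Λ)).fun_sub (hdiff t ht).hasDerivAt
  have hG' : HasDerivAt (fun t => (c / Λ * t - y t) ^ 2 - stableEnvelope α Λ t)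
      (2 * (c / Λ * t - y t) * (c / Λ - deriv y t) - 2 / Λ * t ^ α) t := by
    refine ((hlin.fun_pow 2).fun_sub (hasDerivAt_stableEnvelope hα hΛ.ne' ht)).congr_deriv ?_
    ring
  rw [hG'.deriv, hy.deriv_eq hΛ.ne' ht]
  have key : 2 * (c / Λ * t - y t) * (c / Λ - (c / Λ + t ^ α / (Λ * y t))) - 2 / Λ * t ^ α
      = 2 * c * t * t ^ α / (Λ ^ 2 * (-y t)) := by
    field_simp
    ring
  rw [key]
  have : 0 < -y t := by linarith
  positivity

end IsStableManifold

/-- Two-sided estimate for the stable manifold: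
`−(2/((1+α)Λ))^{1/2} x^{(1+α)/2} < y_c(x) < −(2/((1+α)Λ))^{1/2} x^{(1+α)/2} + (c/Λ) x`. -/
theorem stable_manifold_bounds (α Λ c : ℝ) (hα : α ∈ Set.Icc (0:ℝ) 1)
    (hΛ : 0 < Λ) (hc : 0 < c) (y : ℝ → ℝ) (hy : IsStableManifold α Λ c y) :
    ∀ x > (0:ℝ),
      -Real.sqrt (2 / ((1 + α) * Λ)) * x ^ ((1 + α) / 2) < y x ∧
        y x < -Real.sqrt (2 / ((1 + α) * Λ)) * x ^ ((1 + α) / 2) + c / Λ * x := by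
  intro x hx
  have hα' : 0 < 1 + α := by linarith [hα.1]
  set a := √(2 / ((1 + α) * Λ)) * x ^ ((1 + α) / 2)
  have ha : a ^ 2 = stableEnvelope α Λ x := sq_sqrt_mul_rpow_half (by positivity) hx.le
  have ha0 : 0 ≤ a := mul_nonneg (sqrt_nonneg _) (rpow_nonneg hx.le _)
  have hlower := abs_lt_of_sq_lt_sq' (ha ▸ hy.sq_lt_stableEnvelope hα' hΛ hc hx) ha0
  have hgap : 0 < c / Λ * x - y x := by
    have := hy.2.2.1 x hx
    have : 0 < c / Λ * x := by positivity
    linarith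
  have hupper : a < c / Λ * x - y x :=
    lt_of_pow_lt_pow_left₀ 2 hgap.le (ha ▸ hy.stableEnvelope_lt_sq hα' hΛ hc hx)
  constructor <;> linarith [hlower.1]
end
end

section
/- Let α ∈ [0,1], Λ > 0, c > 0, and let y_c be a stable-manifold function for the parameter c. Then for all x > 0 one has y_c(x) > −(1/c)·x^α, i.e. the stable manifold lies strictly above the curve y = −x^α/c. -/
/-!
Put `h = y + x ^ α / c`, so that the equation reads `Λ y y' = c h`. As `y < 0`, `y' = k h` with
`k = c / (Λ y)` continuous on `(0, ∞)`, and `h' = k h + α x ^ (α - 1) / c ≥ k h`. For a primitive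
`κ` of `k`, the integrating factor makes `h e^{-κ}` nondecreasing, so `h x ≤ 0` would force
`h ≤ 0` on `(0, x]`. There `y' ≥ 0`, whence `y x ≥ y 0 = 0`, contradicting `y x < 0`.
-/

open Real Set MeasureTheory Filter

noncomputable section

theorem ContinuousOn.integral_hasDerivAt_right {f : ℝ → ℝ} {s : Set ℝ} (hso : IsOpen s)
    [hs : s.OrdConnected] (hf : ContinuousOn f s) {a b : ℝ} (ha : a ∈ s) (hb : b ∈ s) :
    HasDerivAt (fun u => ∫ t in a..u, f t) (f b) b :=
  intervalIntegral.integral_hasDerivAt_right ((hf.mono (hs.uIcc_subset ha hb)).intervalIntegrable)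
    (hf.stronglyMeasurableAtFilter hso b hb) (hf.continuousAt (hso.mem_nhds hb))

theorem monotoneOn_mul_exp_neg_of_mul_le_deriv {s : Set ℝ} (hs : Convex ℝ s)
    {h h' κ k : ℝ → ℝ} (hh : ∀ t ∈ s, HasDerivAt h (h' t) t)
    (hκ : ∀ t ∈ s, HasDerivAt κ (k t) t) (hle : ∀ t ∈ s, k t * h t ≤ h' t) :
    MonotoneOn (fun t => h t * exp (-κ t)) s := by
  have hderiv : ∀ t ∈ s, HasDerivAt (fun t => h t * exp (-κ t))
      ((h' t - k t * h t) * exp (-κ t)) t := fun t ht =>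
    ((hh t ht).mul (hκ t ht).neg.exp).congr_deriv (by simp only [Pi.neg_apply]; ring)
  refine monotoneOn_of_hasDerivWithinAt_nonneg hs
    (fun t ht => (hderiv t ht).continuousAt.continuousWithinAt)
    (fun t ht => (hderiv t (interior_subset ht)).hasDerivWithinAt) fun t ht => ?_
  exact mul_nonneg (sub_nonneg.2 (hle t (interior_subset ht))) (exp_pos _).le

namespace IsStableManifold

variable {α Λ c : ℝ} {y : ℝ → ℝ}

theorem neg_of_pos (hy : IsStableManifold α Λ c y) {x : ℝ} (hx : 0 < x) : y x < 0 :=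
  hy.2.2.1 x hx

theorem differentiableAt (hy : IsStableManifold α Λ c y) {x : ℝ} (hx : 0 < x) :
    DifferentiableAt ℝ y x :=
  hy.2.2.2.1 x hx

theorem continuousOn_Ioi (hy : IsStableManifold α Λ c y) : ContinuousOn y (Ioi 0) :=
  hy.1.mono Ioi_subset_Ici_self

theorem hasDerivAt_add_rpow_div (hy : IsStableManifold α Λ c y) {x : ℝ} (hx : 0 < x) :
    HasDerivAt (fun t => y t + t ^ α / c) (deriv y x + α * x ^ (α - 1) / c) x :=
  (hy.differentiableAt hx).hasDerivAt.add ((hasDerivAt_rpow_const (Or.inl hx.ne')).div_const c)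

theorem mul_deriv_eq (hy : IsStableManifold α Λ c y) (hc : c ≠ 0) {x : ℝ} (hx : 0 < x) :
    Λ * y x * deriv y x = c * (y x + x ^ α / c) := by
  rw [hy.2.2.2.2 x hx]
  field_simp

theorem add_rpow_div_nonpos_of_le (hy : IsStableManifold α Λ c y) (hα : 0 ≤ α) (hΛ : Λ ≠ 0)
    (hc : 0 < c) {a x : ℝ} (ha : 0 < a) (hax : a ≤ x) (hx : y x + x ^ α / c ≤ 0) :
    y a + a ^ α / c ≤ 0 := by
  have hk : ContinuousOn (fun t => c / (Λ * y t)) (Ioi 0) :=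
    continuousOn_const.div (continuousOn_const.mul hy.continuousOn_Ioi)
      fun t ht => mul_ne_zero hΛ (hy.neg_of_pos ht).ne
  have hmono := monotoneOn_mul_exp_neg_of_mul_le_deriv (convex_Ioi 0)
    (fun t ht => hy.hasDerivAt_add_rpow_div ht)
    (fun t ht => hk.integral_hasDerivAt_right isOpen_Ioi (mem_Ioi.2 one_pos) ht) fun t ht => by
      have hyt : Λ * y t ≠ 0 := mul_ne_zero hΛ (hy.neg_of_pos ht).ne
      have hderiv : deriv y t = c / (Λ * y t) * (y t + t ^ α / c) := by
        rw [div_mul_eq_mul_div, ← hy.mul_deriv_eq hc.ne' ht, mul_div_cancel_left₀ _ hyt]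
      rw [hderiv, le_add_iff_nonneg_right]
      have : 0 < t ^ (α - 1) := rpow_pos_of_pos ht _
      positivity
  have := hmono ha (ha.trans_le hax) hax
  dsimp only at this
  exact nonpos_of_mul_nonpos_left (this.trans (mul_nonpos_of_nonpos_of_nonneg hx (exp_pos _).le))
    (exp_pos _)

theorem monotoneOn_Icc_of_add_rpow_div_nonpos (hy : IsStableManifold α Λ c y) (hΛ : 0 < Λ)
    (hc : 0 < c) {x : ℝ} (hx : ∀ t ∈ Ioo 0 x, y t + t ^ α / c ≤ 0) :
    MonotoneOn y (Icc 0 x) := by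
  refine monotoneOn_of_deriv_nonneg (convex_Icc 0 x) (hy.1.mono Icc_subset_Ici_self)
    (fun t ht => ?_) fun t ht => ?_ <;> rw [interior_Icc] at ht
  · exact (hy.differentiableAt ht.1).differentiableWithinAt
  · have hyt : Λ * y t < 0 := mul_neg_of_pos_of_neg hΛ (hy.neg_of_pos ht.1)
    have : Λ * y t * deriv y t ≤ 0 := by
      rw [hy.mul_deriv_eq hc.ne' ht.1]
      exact mul_nonpos_of_nonneg_of_nonpos hc.le (hx t ht)
    exact nonneg_of_mul_nonpos_right this hyt

end IsStableManifold

/-- The stable manifold lies strictly above the curve `y = −x^α/c`. -/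
theorem stable_manifold_above (α Λ c : ℝ) (hα : α ∈ Set.Icc (0:ℝ) 1)
    (hΛ : 0 < Λ) (hc : 0 < c) (y : ℝ → ℝ) (hy : IsStableManifold α Λ c y) :
    ∀ x > (0:ℝ), -(1 / c) * x ^ α < y x := by
  intro x hx
  by_contra! hle
  have hgap : y x + x ^ α / c ≤ 0 := by
    rw [neg_mul, one_div_mul_eq_div] at hle
    linarith
  have hmono := hy.monotoneOn_Icc_of_add_rpow_div_nonpos hΛ hc fun t ht =>
    hy.add_rpow_div_nonpos_of_le hα.1 hΛ.ne' hc ht.1 ht.2.le hgap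
  have := hmono (left_mem_Icc.2 hx.le) (right_mem_Icc.2 hx.le) hx.le
  linarith [hy.2.1, hy.neg_of_pos hx]
end
end
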